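/- arXiv:1607.04798 — 3 statements merged into one kernel-verified Lean document; each statement's English description precedes it below -/
import Mathlib

section
/- Let X and Z be real symmetric positive definite n×n matrices, and define W := X^{1/2} (X^{1/2} Z X^{1/2})^{−1/2} X^{1/2}. Then W is symmetric positive definite, W Z W = X, and W is the unique symmetric positive definite matrix satisfying W Z W = X. -/
open Matrix

/-!
Write `S = X^{1/2}` and `M = (S Z S)^{1/2}`. The congruence `W ↦ M (S⁻¹ W S⁻¹) M` is injective
and turns the equation `W Z W = S S` into `B B = M M` for `B = M (S⁻¹ W S⁻¹) M`, because
`M M = S Z S`. Congruence by the Hermitian invertible matrices `S⁻¹` and `M` preserves positive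
definiteness, so the positive definite solutions `W` correspond to the positive definite square
roots of `M M`, of which `M` is the only one; it comes from `W = S M⁻¹ S`.
-/

namespace Units

variable {α : Type*} [Monoid α] (S M : αˣ) {Z : α}

theorem mul_inv_mul_mul_mul_inv_mul_eq_mul_self (hM : (M : α) * M = S * Z * S) :
    (S * ↑M⁻¹ * S) * Z * (S * ↑M⁻¹ * S) = (S : α) * S := by
  calc (S * ↑M⁻¹ * S) * Z * (S * ↑M⁻¹ * S) = S * ↑M⁻¹ * (S * Z * S) * ↑M⁻¹ * S := by
        simp only [mul_assoc]
    _ = S * S := by rw [← hM]; simp [mul_assoc]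

theorem conj_mul_self_eq_mul_self (hM : (M : α) * M = S * Z * S) {W : α}
    (hW : W * Z * W = S * S) :
    (M * (↑S⁻¹ * W * ↑S⁻¹) * M) * (M * (↑S⁻¹ * W * ↑S⁻¹) * M) = (M : α) * M := by
  calc (M * (↑S⁻¹ * W * ↑S⁻¹) * M) * (M * (↑S⁻¹ * W * ↑S⁻¹) * M)
        = M * ↑S⁻¹ * W * ↑S⁻¹ * (M * M) * ↑S⁻¹ * W * ↑S⁻¹ * M := by simp only [mul_assoc]
    _ = M * ↑S⁻¹ * (W * Z * W) * ↑S⁻¹ * M := by rw [hM]; simp [mul_assoc]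
    _ = M * M := by rw [hW]; simp [mul_assoc]

theorem eq_mul_inv_mul_of_conj_eq {W : α} (h : M * (↑S⁻¹ * W * ↑S⁻¹) * M = M) :
    W = S * ↑M⁻¹ * S := by
  have hW : ↑S⁻¹ * W * ↑S⁻¹ = (↑M⁻¹ : α) := by
    rw [← mul_right_inj M, ← mul_left_inj M, h]; simp
  rw [← hW]; simp [mul_assoc]

end Units

namespace Matrix

theorem PosDef.mul_mul_self_of_isHermitian {n R : Type*} [Fintype n] [DecidableEq n] [Ring R]
    [PartialOrder R] [StarRing R] {A S : Matrix n n R} (hA : A.PosDef) (hS : S.IsHermitian)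
    (hSu : IsUnit S) : (S * A * S).PosDef := by
  simpa only [star_eq_conjTranspose, hS.eq] using (hSu.posDef_star_left_conjugate_iff).mpr hA

open ComplexOrder MatrixOrder in
theorem PosSemidef.eq_of_mul_self_eq_mul_self {n 𝕜 : Type*} [Fintype n] [DecidableEq n]
    [RCLike 𝕜] {A B : Matrix n n 𝕜} (hA : A.PosSemidef) (hB : B.PosSemidef) (h : A * A = B * B) :
    A = B :=
  (CFC.mul_self_eq_mul_self_iff A B hA.nonneg hB.nonneg).mp h

end Matrix

theorem nt_scaling_matrix_general (n : ℕ) (X Z sX M1 : Matrix (Fin n) (Fin n) ℝ)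
    (hsX : sX.PosDef) (hsX2 : sX * sX = X)
    (hM1 : M1.PosDef) (hM12 : M1 * M1 = sX * Z * sX) :
    (sX * M1⁻¹ * sX).PosDef ∧
      (sX * M1⁻¹ * sX) * Z * (sX * M1⁻¹ * sX) = X ∧
      ∀ W : Matrix (Fin n) (Fin n) ℝ, W.PosDef → W * Z * W = X → W = sX * M1⁻¹ * sX := by
  subst hsX2
  obtain ⟨S, rfl⟩ := hsX.isUnit
  obtain ⟨M, rfl⟩ := hM1.isUnit
  have hSinv : (↑S⁻¹ : Matrix (Fin n) (Fin n) ℝ).PosDef := by rw [coe_units_inv]; exact hsX.inv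
  have hMinv : (↑M⁻¹ : Matrix (Fin n) (Fin n) ℝ).PosDef := by rw [coe_units_inv]; exact hM1.inv
  rw [← coe_units_inv]
  refine ⟨hMinv.mul_mul_self_of_isHermitian hsX.isHermitian S.isUnit,
    S.mul_inv_mul_mul_mul_inv_mul_eq_mul_self M hM12, fun W hW hWZW => ?_⟩
  have hconj :=
    (hW.mul_mul_self_of_isHermitian hSinv.isHermitian S⁻¹.isUnit).mul_mul_self_of_isHermitian
      hM1.isHermitian M.isUnit
  exact S.eq_mul_inv_mul_of_conj_eq M <| hconj.posSemidef.eq_of_mul_self_eq_mul_self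
    hM1.posSemidef (S.conj_mul_self_eq_mul_self M hM12 hWZW)

/-- The Nesterov–Todd scaling matrix `W := X^{1/2} (X^{1/2} Z X^{1/2})^{−1/2} X^{1/2}` is
symmetric positive definite, satisfies `W Z W = X`, and is the unique symmetric positive
definite matrix with this property. Here `sX` is the (unique) symmetric positive definite
square root of `X` and `M1` is the symmetric positive definite square root of `sX * Z * sX`. -/
theorem nt_scaling_matrix (n : ℕ) (X Z sX M1 : Matrix (Fin n) (Fin n) ℝ)
    (hX : X.PosDef) (hZ : Z.PosDef)
    (hsX : sX.PosDef) (hsX2 : sX * sX = X)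
    (hM1 : M1.PosDef) (hM12 : M1 * M1 = sX * Z * sX) :
    (sX * M1⁻¹ * sX).PosDef ∧
      (sX * M1⁻¹ * sX) * Z * (sX * M1⁻¹ * sX) = X ∧
      ∀ W : Matrix (Fin n) (Fin n) ℝ, W.PosDef → W * Z * W = X → W = sX * M1⁻¹ * sX :=
  nt_scaling_matrix_general n X Z sX M1 hsX hsX2 hM1 hM12
end

section
/- Let G be a finite connected chordal simple graph, and let 𝒞 be the set of maximal cliques of G. Then there exists a tree T whose vertex set is 𝒞 such that for any two maximal cliques C and C′ in 𝒞 and any maximal clique C″ lying on the (unique) path in T between C and C′, one has C ∩ C′ ⊆ C″. -/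
/-!
A chordal graph has a simplicial vertex `v` (Dirac), and the closed neighbourhood `N[v]` is the
only maximal clique containing `v`. So a clique tree of `G - v` becomes one of `G`: if `N(v)` is a
maximal clique of `G - v`, rename that node to `N[v]`; otherwise attach `N[v]` as a leaf to a
maximal clique of `G - v` containing `N(v)`. The intersection property survives because `v`
lies in no other maximal clique.
-/

def SimpleGraph.IsChordal {V : Type*} (G : SimpleGraph V) : Prop :=
  ∀ ⦃v : V⦄ (w : G.Walk v v), w.IsCycle → 4 ≤ w.length →
    ∃ x y, x ∈ w.support ∧ y ∈ w.support ∧ G.Adj x y ∧ s(x, y) ∉ w.edges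

def SimpleGraph.IsMaxClique {V : Type*} (G : SimpleGraph V) (C : Finset V) : Prop :=
  G.IsClique (C : Set V) ∧ ∀ D : Finset V, G.IsClique (D : Set V) → C ⊆ D → C = D

namespace SimpleGraph

variable {V : Type*} {G : SimpleGraph V}

namespace Walk

lemma two_le_length_of_notMem_edges {u v : V} (p : G.Walk u v) (huv : u ≠ v)
    (hp : s(u, v) ∉ p.edges) : 2 ≤ p.length := by
  match p with
  | nil => exact absurd rfl huv
  | cons h nil => simp at hp
  | cons _ (cons _ _) => simp

variable [DecidableEq V]

lemma isChordless_of_forall_length_le {u v : V} (p : G.Walk u v)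
    (hmin : ∀ q : G.Walk u v, q.support ⊆ p.support → p.length ≤ q.length) : p.IsChordless := by
  rw [isChordless_iff_forall_mem_edges]
  intro x y hx hy hxy
  by_contra hnot
  have hsplit := congrArg length (p.take_spec hx)
  rw [length_append] at hsplit
  rcases (mem_support_append_iff _ _).mp ((p.take_spec hx).symm ▸ hy) with hy₁ | hy₂
  · set q := p.takeUntil x hx
    have hlong := two_le_length_of_notMem_edges (q.dropUntil y hy₁) hxy.ne.symm fun h =>
      hnot (Sym2.eq_swap ▸ p.edges_takeUntil_subset_edges hx (q.edges_dropUntil_subset_edges hy₁ h))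
    have hq := congrArg length (q.take_spec hy₁)
    rw [length_append] at hq
    have := hmin ((q.takeUntil y hy₁).append (cons hxy.symm (p.dropUntil x hx))) (by
      intro z hz
      simp only [support_append, support_cons, List.tail_cons, List.mem_append] at hz
      rcases hz with hz | hz
      · exact p.support_takeUntil_subset_support hx (q.support_takeUntil_subset_support hy₁ hz)
      · exact p.support_dropUntil_subset_support hx hz)
    simp only [length_append, length_cons] at this
    omega
  · set q := p.dropUntil x hx
    have hlong := two_le_length_of_notMem_edges (q.takeUntil y hy₂) hxy.ne fun h =>
      hnot (p.edges_dropUntil_subset_edges hx (q.edges_takeUntil_subset_edges hy₂ h))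
    have hq := congrArg length (q.take_spec hy₂)
    rw [length_append] at hq
    have := hmin ((p.takeUntil x hx).append (cons hxy (q.dropUntil y hy₂))) (by
      intro z hz
      simp only [support_append, support_cons, List.tail_cons, List.mem_append] at hz
      rcases hz with hz | hz
      · exact p.support_takeUntil_subset_support hx hz
      · exact p.support_dropUntil_subset_support hx (q.support_dropUntil_subset_support hy₂ hz))
    simp only [length_append, length_cons] at this
    omega

lemma exists_isPath_isChordless_support_subset {u v : V} (p : G.Walk u v) :
    ∃ q : G.Walk u v, q.IsPath ∧ q.IsChordless ∧ q.support ⊆ p.support := by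
  classical
  have hex : ∃ n, ∃ q : G.Walk u v, q.support ⊆ p.support ∧ q.length = n :=
    ⟨_, p, List.Subset.refl _, rfl⟩
  obtain ⟨q, hqp, hqlen⟩ := Nat.find_spec hex
  have hbp : q.bypass.support ⊆ p.support := List.Subset.trans q.support_bypass_subset_support hqp
  refine ⟨q.bypass, q.bypass_isPath, isChordless_of_forall_length_le _ fun r hr => ?_, hbp⟩
  calc q.bypass.length ≤ q.length := q.length_bypass_le_length
    _ ≤ r.length := hqlen ▸ Nat.find_min' hex ⟨r, List.Subset.trans hr hbp, rfl⟩

end Walk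

/-- Closing the path through `a` gives a cycle of length at least four whose only possible
chords join `a` to the interior of the path. -/
theorem IsChordal.exists_adj_of_isChordless (hG : G.IsChordal) {a x y : V} {q : G.Walk x y}
    (hq : q.IsPath) (hqc : q.IsChordless) (hxy : x ≠ y) (hnadj : ¬G.Adj x y)
    (ha : a ∉ q.support) (hax : G.Adj a x) (hay : G.Adj a y) :
    ∃ w ∈ q.support, w ≠ x ∧ w ≠ y ∧ G.Adj a w := by
  by_contra! hno
  have hlen : 2 ≤ q.length :=
    q.two_le_length_of_notMem_edges hxy fun h => hnadj (q.adj_of_mem_edges h)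
  have hcyc : (Walk.cons hax (q.concat hay.symm)).IsCycle := by
    refine (Walk.cons_isCycle_iff _ _).mpr ⟨hq.concat ha _, ?_⟩
    rw [Walk.edges_concat, List.concat_eq_append, List.mem_append, List.mem_singleton, not_or]
    exact ⟨fun h => ha (q.fst_mem_support_of_mem_edges h), by grind⟩
  obtain ⟨u, w, hu, hw, huw, hnot⟩ := hG _ hcyc (by simp; omega)
  have hsupp : ∀ z ∈ (Walk.cons hax (q.concat hay.symm)).support, z = a ∨ z ∈ q.support := by
    simp only [Walk.support_cons, Walk.support_concat, List.mem_cons, List.mem_append]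
    tauto
  have key : ∀ z ∈ q.support, G.Adj a z → z = x ∨ z = y := fun z hz h => by
    by_contra! hz'
    exact hno z hz hz'.1 hz'.2 h
  simp only [Walk.edges_cons, Walk.edges_concat, List.concat_eq_append, List.mem_cons,
    List.mem_append, not_or] at hnot
  rcases hsupp u hu with rfl | hu' <;> rcases hsupp w hw with rfl | hw'
  · exact huw.ne rfl
  · rcases key w hw' huw with rfl | rfl <;> simp at hnot
  · rcases key u hu' huw.symm with rfl | rfl <;> simp [Sym2.eq_swap] at hnot
  · exact hnot.2.1 (hqc.mem_edges hu' hw' huw)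

lemma IsChordal.isClique_setOf_adj_of_connected (hG : G.IsChordal) {a : V} {B : Set V}
    (haB : a ∉ B) (hB : ∀ z ∈ B, ¬G.Adj a z)
    (hBconn : ∀ z ∈ B, ∀ z' ∈ B, ∃ p : G.Walk z z', ∀ w ∈ p.support, w ∈ B) :
    G.IsClique {x | G.Adj a x ∧ ∃ z ∈ B, G.Adj x z} := by
  classical
  rintro x ⟨hax, z, hz, hxz⟩ y ⟨hay, z', hz', hyz'⟩ hxy
  by_contra hnadj
  obtain ⟨p, hp⟩ := hBconn z hz z' hz'
  obtain ⟨q, hq, hqc, hqp⟩ :=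
    (Walk.cons hxz (p.concat hyz'.symm)).exists_isPath_isChordless_support_subset
  have hsupp : ∀ w ∈ q.support, w = x ∨ w ∈ B ∨ w = y := fun w hw => by
    have := hqp hw
    simp only [Walk.support_cons, Walk.support_concat, List.mem_cons, List.mem_append,
      List.not_mem_nil, or_false] at this
    rcases this with h | h | h
    · exact .inl h
    · exact .inr (.inl (hp w h))
    · exact .inr (.inr h)
  have ha : a ∉ q.support := fun h => by
    rcases hsupp a h with h | h | h
    · exact hax.ne h
    · exact haB h
    · exact hay.ne h
  obtain ⟨w, hw, hwx, hwy, haw⟩ := hG.exists_adj_of_isChordless hq hqc hxy hnadj ha hax hay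
  rcases hsupp w hw with h | h | h
  · exact hwx h
  · exact hB w h haw
  · exact hwy h

def IsSimplicialIn (G : SimpleGraph V) (s : Finset V) (v : V) : Prop :=
  v ∈ s ∧ G.IsClique (↑s ∩ G.neighborSet v)

lemma IsSimplicialIn.mono {s t : Finset V} {v : V} (hv : G.IsSimplicialIn t v) (hts : t ⊆ s)
    (hN : ∀ y ∈ s, G.Adj v y → y ∈ t) : G.IsSimplicialIn s v := by
  refine ⟨hts hv.1, hv.2.subset ?_⟩
  exact fun y hy => ⟨hN y hy.1 hy.2, hy.2⟩

lemma exists_isSimplicialIn_notMem {t : Finset V} {S : Set V}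
    (ht : ∀ a ∈ t, ∀ b ∈ t, a ≠ b → ¬G.Adj a b → ∃ v, G.IsSimplicialIn t v ∧ v ≠ a ∧ ¬G.Adj a v)
    (hS : G.IsClique S) {c : V} (hct : c ∈ t) (hcS : c ∉ S) : ∃ v ∉ S, G.IsSimplicialIn t v := by
  by_cases hcl : G.IsClique (t : Set V)
  · exact ⟨c, hcS, hct, hcl.subset Set.inter_subset_left⟩
  obtain ⟨x, hx, y, hy, hxy, hnadj⟩ : ∃ x ∈ t, ∃ y ∈ t, x ≠ y ∧ ¬G.Adj x y := by
    simpa [isClique_iff, Set.Pairwise] using hcl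
  obtain ⟨v, hv, hvx, hxv⟩ := ht x hx y hy hxy hnadj
  by_cases hvS : v ∈ S
  · obtain ⟨w, hw, hwv, hvw⟩ := ht v hv.1 x hx hvx fun h => hxv h.symm
    exact ⟨w, fun hwS => hvw (hS hvS hwS hwv.symm), hw⟩
  · exact ⟨v, hvS, hv⟩

lemma exists_component {t : Finset V} {b : V} (hb : b ∈ t) :
    ∃ B ⊆ t, b ∈ B ∧ (∀ z ∈ B, ∀ y ∈ t, G.Adj z y → y ∈ B) ∧
      ∀ z ∈ B, ∀ z' ∈ B, ∃ p : G.Walk z z', ∀ w ∈ p.support, w ∈ B := by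
  classical
  set B := t.filter fun z => ∃ p : G.Walk b z, ∀ w ∈ p.support, w ∈ t
  have hB : ∀ {z} (p : G.Walk b z), (∀ w ∈ p.support, w ∈ t) → ∀ w ∈ p.support, w ∈ B :=
    fun p hp w hw => Finset.mem_filter.mpr ⟨hp w hw, p.takeUntil w hw,
      fun u hu => hp u (p.support_takeUntil_subset_support hw hu)⟩
  refine ⟨B, Finset.filter_subset _ _, hB .nil (by simpa using hb) b (by simp), ?_, ?_⟩
  · intro z hz y hy hzy
    obtain ⟨-, p, hp⟩ := Finset.mem_filter.mp hz
    refine hB (p.concat hzy) (fun w hw => ?_) y (by simp)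
    rw [Walk.support_concat, List.mem_append, List.mem_singleton] at hw
    rcases hw with hw | rfl
    · exact hp w hw
    · exact hy
  · intro z hz z' hz'
    obtain ⟨-, p, hp⟩ := Finset.mem_filter.mp hz
    obtain ⟨-, p', hp'⟩ := Finset.mem_filter.mp hz'
    refine ⟨p.reverse.append p', fun w hw => ?_⟩
    rcases (Walk.mem_support_append_iff _ _).mp hw with hw | hw
    · exact hB p hp w (by simpa using hw)
    · exact hB p' hp' w hw

/-- A form of Dirac's lemma. The vertices `S` outside the component `B` of `b` in `s \ N[a]`
with a neighbour in `B` are neighbours of `a`, hence form a clique; by induction `B ∪ S` has a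
simplicial vertex outside `S`, and it stays simplicial in `s` since `S` separates `B` from the
rest of `s`. -/
theorem IsChordal.exists_isSimplicialIn_not_adj (hG : G.IsChordal) (s : Finset V) :
    ∀ a ∈ s, ∀ b ∈ s, a ≠ b → ¬G.Adj a b → ∃ v, G.IsSimplicialIn s v ∧ v ≠ a ∧ ¬G.Adj a v := by
  classical
  induction s using Finset.strongInduction with
  | H s ih =>
  intro a ha b hb hab hnadj
  set t := s.filter fun z => z ≠ a ∧ ¬G.Adj a z
  have hbt : b ∈ t := Finset.mem_filter.mpr ⟨hb, hab.symm, hnadj⟩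
  obtain ⟨B, hBt, hbB, hBclosed, hBconn⟩ := G.exists_component hbt
  have haB : ∀ {z}, z ∈ B → z ≠ a ∧ ¬G.Adj a z := fun hz => (Finset.mem_filter.mp (hBt hz)).2
  set S := s.filter fun x => G.Adj a x ∧ ∃ z ∈ B, G.Adj x z
  have hBS : ∀ z ∈ B, ∀ y ∈ s, G.Adj z y → y ∈ B ∪ S := by
    intro z hz y hy hzy
    by_cases hyt : y ∈ t
    · exact Finset.mem_union_left _ (hBclosed z hz y hyt hzy)
    · have hay : G.Adj a y := by
        by_contra h
        refine hyt (Finset.mem_filter.mpr ⟨hy, ?_, h⟩)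
        rintro rfl
        exact (haB hz).2 hzy.symm
      exact Finset.mem_union_right _ (Finset.mem_filter.mpr ⟨hy, hay, z, hz, hzy.symm⟩)
  have hS : G.IsClique (S : Set V) :=
    (hG.isClique_setOf_adj_of_connected (a := a) (B := B) (fun h => (haB h).1 rfl)
      (fun z hz => (haB hz).2) hBconn).subset fun x hx => (Finset.mem_filter.mp hx).2
  have hsub : B ∪ S ⊂ s := by
    refine Finset.ssubset_iff_of_subset ?_ |>.mpr ⟨a, ha, ?_⟩
    · exact Finset.union_subset (hBt.trans (Finset.filter_subset _ _)) (Finset.filter_subset _ _)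
    · simp only [Finset.mem_union, not_or]
      exact ⟨fun h => (haB h).1 rfl, fun h => G.irrefl (Finset.mem_filter.mp h).2.1⟩
  obtain ⟨v, hvS, hv⟩ := exists_isSimplicialIn_notMem (ih _ hsub) hS (c := b)
    (Finset.mem_union_left _ hbB) fun h => hnadj (Finset.mem_filter.mp h).2.1
  have hvB : v ∈ B := (Finset.mem_union.mp hv.1).resolve_right hvS
  exact ⟨v, hv.mono hsub.subset (hBS v hvB), haB hvB⟩

theorem IsChordal.exists_isSimplicialIn (hG : G.IsChordal) {s : Finset V} (hs : s.Nonempty) :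
    ∃ v, G.IsSimplicialIn s v := by
  obtain ⟨c, hc⟩ := hs
  obtain ⟨v, -, hv⟩ := exists_isSimplicialIn_notMem (hG.exists_isSimplicialIn_not_adj s)
    isClique_empty hc (Set.notMem_empty c)
  exact ⟨v, hv⟩

lemma IsAcyclic.forall_mem_support_of_isPath (hG : G.IsAcyclic) {P : V → Prop} {u v : V}
    (w : G.Walk u v) (hw : ∀ x ∈ w.support, P x) {p : G.Walk u v} (hp : p.IsPath) :
    ∀ x ∈ p.support, P x := by
  classical
  obtain rfl : p = w.bypass := congrArg Subtype.val
    ((hG.subsingleton_path u v).elim ⟨p, hp⟩ ⟨w.bypass, w.bypass_isPath⟩)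
  exact fun x hx => hw x (w.support_bypass_subset_support hx)

section CliqueTree

def IsMaxCliqueIn (G : SimpleGraph V) (s C : Finset V) : Prop :=
  Maximal (fun D : Finset V => D ⊆ s ∧ G.IsClique (D : Set V)) C

lemma isMaxCliqueIn_univ [Fintype V] {C : Finset V} :
    G.IsMaxCliqueIn Finset.univ C ↔ G.IsMaxClique C := by
  simp only [IsMaxCliqueIn, IsMaxClique, Maximal, Finset.subset_univ, true_and]
  exact and_congr_right fun _ =>
    ⟨fun h D hD hCD => le_antisymm hCD (h hD hCD), fun h D hD hCD => (h D hD hCD).ge⟩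

lemma IsMaxCliqueIn.eq_empty {C : Finset V} (hC : G.IsMaxCliqueIn ∅ C) : C = ∅ :=
  Finset.subset_empty.mp hC.prop.1

lemma IsMaxCliqueIn.mono {s t C : Finset V} (hC : G.IsMaxCliqueIn s C) (hCt : C ⊆ t)
    (hts : t ⊆ s) : G.IsMaxCliqueIn t C :=
  ⟨⟨hCt, hC.prop.2⟩, fun _ hD hCD => hC.2 ⟨hD.1.trans hts, hD.2⟩ hCD⟩

lemma IsMaxCliqueIn.erase [DecidableEq V] {s C : Finset V} {v : V} (hC : G.IsMaxCliqueIn s C)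
    (hvC : v ∉ C) : G.IsMaxCliqueIn (s.erase v) C :=
  hC.mono (fun _ hx => Finset.mem_erase.mpr ⟨ne_of_mem_of_not_mem hx hvC, hC.prop.1 hx⟩)
    (Finset.erase_subset _ _)

lemma IsMaxCliqueIn.notMem_of_erase [DecidableEq V] {s C : Finset V} {v : V}
    (hC : G.IsMaxCliqueIn (s.erase v) C) : v ∉ C := fun h =>
  (Finset.mem_erase.mp (hC.prop.1 h)).1 rfl

lemma exists_isMaxCliqueIn_superset [Finite V] {s K : Finset V} (hKs : K ⊆ s)
    (hK : G.IsClique (K : Set V)) : ∃ C, K ⊆ C ∧ G.IsMaxCliqueIn s C :=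
  Finite.exists_le_maximal (p := fun D : Finset V => D ⊆ s ∧ G.IsClique (D : Set V)) ⟨hKs, hK⟩

section Simplicial

variable [DecidableRel G.Adj] {s : Finset V} {v : V}

lemma IsSimplicialIn.isClique_filter_adj (hv : G.IsSimplicialIn s v) :
    G.IsClique (s.filter (G.Adj v) : Set V) := by
  refine hv.2.subset fun x hx => ?_
  simpa using hx

variable [DecidableEq V]

lemma subset_insert_filter_adj {D : Finset V} (hD : G.IsClique (D : Set V)) (hDs : D ⊆ s)
    (hvD : v ∈ D) : D ⊆ insert v (s.filter (G.Adj v)) := fun x hx => by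
  rcases eq_or_ne x v with rfl | hxv
  · exact Finset.mem_insert_self _ _
  · exact Finset.mem_insert_of_mem (Finset.mem_filter.mpr ⟨hDs hx, hD hvD hx hxv.symm⟩)

lemma filter_adj_subset_erase : s.filter (G.Adj v) ⊆ s.erase v := fun _ hx =>
  Finset.mem_erase.mpr ⟨(G.ne_of_adj (Finset.mem_filter.mp hx).2).symm, Finset.filter_subset _ _ hx⟩

lemma IsSimplicialIn.isMaxCliqueIn_insert (hv : G.IsSimplicialIn s v) :
    G.IsMaxCliqueIn s (insert v (s.filter (G.Adj v))) := by
  have hsub : insert v (s.filter (G.Adj v)) ⊆ s :=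
    Finset.insert_subset hv.1 (Finset.filter_subset _ _)
  have hcl : G.IsClique ((insert v (s.filter (G.Adj v)) : Finset V) : Set V) := by
    rw [Finset.coe_insert]
    exact hv.isClique_filter_adj.insert fun z hz _ => (Finset.mem_filter.mp hz).2
  exact ⟨⟨hsub, hcl⟩, fun D hD hND => subset_insert_filter_adj hD.2 hD.1 (hND (by simp))⟩

lemma IsSimplicialIn.eq_of_mem (hv : G.IsSimplicialIn s v) {C : Finset V}
    (hC : G.IsMaxCliqueIn s C) (hvC : v ∈ C) : C = insert v (s.filter (G.Adj v)) :=
  hC.eq_of_le hv.isMaxCliqueIn_insert.prop (subset_insert_filter_adj hC.prop.2 hC.prop.1 hvC)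

lemma IsMaxCliqueIn.of_erase (hv : G.IsSimplicialIn s v) {C : Finset V}
    (hC : G.IsMaxCliqueIn (s.erase v) C) (hCK : C ≠ s.filter (G.Adj v)) : G.IsMaxCliqueIn s C := by
  refine ⟨⟨hC.prop.1.trans (Finset.erase_subset _ _), hC.prop.2⟩, fun D hD hCD => ?_⟩
  by_cases hvD : v ∈ D
  · have hCK' : C ⊆ s.filter (G.Adj v) := fun x hx => by
      have hxv : x ≠ v := (Finset.mem_erase.mp (hC.prop.1 hx)).1
      simpa [hxv] using subset_insert_filter_adj hD.2 hD.1 hvD (hCD hx)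
    exact absurd (hC.eq_of_le ⟨filter_adj_subset_erase, hv.isClique_filter_adj⟩ hCK') hCK
  · exact hC.2 ⟨fun x hx => Finset.mem_erase.mpr ⟨ne_of_mem_of_not_mem hx hvD, hD.1 hx⟩, hD.2⟩ hCD

lemma IsSimplicialIn.not_isMaxCliqueIn_filter_adj (hv : G.IsSimplicialIn s v) :
    ¬G.IsMaxCliqueIn s (s.filter (G.Adj v)) := fun hK => by
  have hKN := hK.eq_of_le hv.isMaxCliqueIn_insert.prop (Finset.subset_insert _ _)
  have hvK : v ∈ s.filter (G.Adj v) := by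
    rw [hKN]
    exact Finset.mem_insert_self v _
  exact G.irrefl (Finset.mem_filter.mp hvK).2

lemma IsSimplicialIn.isMaxCliqueIn_erase (hv : G.IsSimplicialIn s v) {C : Finset V}
    (hC : G.IsMaxCliqueIn s C) (hCN : C ≠ insert v (s.filter (G.Adj v))) :
    G.IsMaxCliqueIn (s.erase v) C :=
  hC.erase fun hvC => hCN (hv.eq_of_mem hC hvC)

lemma IsSimplicialIn.isMaxCliqueIn_swap_iff (hv : G.IsSimplicialIn s v)
    (hK : G.IsMaxCliqueIn (s.erase v) (s.filter (G.Adj v))) {C : Finset V} :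
    G.IsMaxCliqueIn s (Equiv.swap (s.filter (G.Adj v)) (insert v (s.filter (G.Adj v))) C) ↔
      G.IsMaxCliqueIn (s.erase v) C := by
  rcases eq_or_ne C (s.filter (G.Adj v)) with rfl | hCK
  · rw [Equiv.swap_apply_left]
    exact ⟨fun _ => hK, fun _ => hv.isMaxCliqueIn_insert⟩
  rcases eq_or_ne C (insert v (s.filter (G.Adj v))) with rfl | hCN
  · rw [Equiv.swap_apply_right]
    exact ⟨fun h => absurd h hv.not_isMaxCliqueIn_filter_adj, fun h => h.notMem_of_erase.elim
      (Finset.mem_insert_self v _)⟩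
  rw [Equiv.swap_apply_of_ne_of_ne hCK hCN]
  exact ⟨fun h => hv.isMaxCliqueIn_erase h hCN, fun h => h.of_erase hv hCK⟩

end Simplicial

variable [DecidableEq V]

/-- A clique tree of `G` on `s`, encoded as a graph on all of `Finset V` in which only maximal
cliques of `s` carry edges. `exists_walk` packages connectivity together with the clique
intersection property. -/
structure IsCliqueTreeOn (G : SimpleGraph V) (s : Finset V) (T : SimpleGraph (Finset V)) :
    Prop where
  isAcyclic : T.IsAcyclic
  isMaxCliqueIn_of_adj : ∀ ⦃C D⦄, T.Adj C D → G.IsMaxCliqueIn s C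
  exists_walk : ∀ ⦃C D⦄, G.IsMaxCliqueIn s C → G.IsMaxCliqueIn s D →
    ∃ w : T.Walk C D, ∀ E ∈ w.support, C ∩ D ⊆ E

lemma isCliqueTreeOn_empty : G.IsCliqueTreeOn ∅ ⊥ where
  isAcyclic := isAcyclic_bot
  isMaxCliqueIn_of_adj _ _ h := h.elim
  exists_walk C D hC hD := by
    obtain rfl := hC.eq_empty
    obtain rfl := hD.eq_empty
    exact ⟨.nil, by simp⟩

namespace IsCliqueTreeOn

variable {s : Finset V} {T : SimpleGraph (Finset V)}

lemma isMaxCliqueIn_of_mem_support (hT : G.IsCliqueTreeOn s T) {C D : Finset V}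
    (w : T.Walk C D) (hC : G.IsMaxCliqueIn s C) : ∀ E ∈ w.support, G.IsMaxCliqueIn s E := by
  induction w with
  | nil => simpa using hC
  | cons h w ih =>
    intro E hE
    rcases List.mem_cons.mp (Walk.support_cons _ _ ▸ hE) with rfl | hE
    · exact hC
    · exact ih (hT.isMaxCliqueIn_of_adj h.symm) E hE

variable [DecidableRel G.Adj] {v : V}

theorem comap_swap (hv : G.IsSimplicialIn s v) (hT : G.IsCliqueTreeOn (s.erase v) T)
    (hK : G.IsMaxCliqueIn (s.erase v) (s.filter (G.Adj v))) :
    G.IsCliqueTreeOn s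
      (T.comap (Equiv.swap (s.filter (G.Adj v)) (insert v (s.filter (G.Adj v))))) := by
  set K := s.filter (G.Adj v)
  set N := insert v K
  set σ := Equiv.swap K N
  have hσσ : ∀ E, σ (σ E) = E := Equiv.swap_apply_self _ _
  have hiff : ∀ C, G.IsMaxCliqueIn s (σ C) ↔ G.IsMaxCliqueIn (s.erase v) C := fun _ =>
    hv.isMaxCliqueIn_swap_iff hK
  have hσmax : ∀ ⦃C⦄, G.IsMaxCliqueIn s C → G.IsMaxCliqueIn (s.erase v) (σ C) := fun C hC =>
    (hiff _).mp ((hσσ C).symm ▸ hC)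
  have hmem : ∀ E, ∀ x ≠ v, x ∈ σ E ↔ x ∈ E := by
    intro E x hx
    rw [Equiv.swap_apply_def]
    split_ifs <;> subst_vars <;> simp [N, hx]
  refine ⟨hT.isAcyclic.of_comap σ.toEmbedding,
    fun C D h => hσσ C ▸ (hiff _).mpr (hT.isMaxCliqueIn_of_adj h), fun C D hC hD => ?_⟩
  obtain ⟨w, hw⟩ := hT.exists_walk (hσmax hC) (hσmax hD)
  let φ : T →g T.comap σ := ⟨σ, fun h => by simpa [hσσ] using h⟩
  refine ⟨(w.map φ).copy (hσσ C) (hσσ D), fun E hE x hx => ?_⟩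
  simp only [Walk.support_copy, Walk.support_map, List.mem_map] at hE
  obtain ⟨E₀, hE₀, rfl⟩ := hE
  by_cases hxv : x = v
  · subst hxv
    have hCN := hv.eq_of_mem hC (Finset.mem_inter.mp hx).1
    have hDN := hv.eq_of_mem hD (Finset.mem_inter.mp hx).2
    have hKE₀ : K ⊆ E₀ := by
      have := hw E₀ hE₀
      rwa [hCN, hDN, Finset.inter_self, Equiv.swap_apply_right] at this
    have hE₀K := hK.eq_of_le (hT.isMaxCliqueIn_of_mem_support w (hσmax hC) E₀ hE₀).prop hKE₀
    simp [φ, ← hE₀K, σ, N]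
  · refine (hmem _ x hxv).mpr (hw E₀ hE₀ ?_)
    simpa [hmem _ x hxv] using hx

lemma exists_walk_sup_edge (hv : G.IsSimplicialIn s v) (hT : G.IsCliqueTreeOn (s.erase v) T)
    {C' : Finset V} (hC' : G.IsMaxCliqueIn (s.erase v) C') (hKC' : s.filter (G.Adj v) ⊆ C')
    {D : Finset V} (hD : G.IsMaxCliqueIn s D) (hDN : D ≠ insert v (s.filter (G.Adj v))) :
    ∃ w : (T ⊔ edge (insert v (s.filter (G.Adj v))) C').Walk (insert v (s.filter (G.Adj v))) D,
      ∀ E ∈ w.support, insert v (s.filter (G.Adj v)) ∩ D ⊆ E := by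
  have hD' := hv.isMaxCliqueIn_erase hD hDN
  obtain ⟨w, hw⟩ := hT.exists_walk hC' hD'
  have hND : insert v (s.filter (G.Adj v)) ∩ D ⊆ C' ∩ D := by
    intro x hx
    obtain ⟨hxN, hxD⟩ := Finset.mem_inter.mp hx
    have hxv : x ≠ v := ne_of_mem_of_not_mem hxD hD'.notMem_of_erase
    exact Finset.mem_inter.mpr ⟨hKC' (by simpa [hxv] using hxN), hxD⟩
  have hNC' : insert v (s.filter (G.Adj v)) ≠ C' := fun h =>
    hC'.notMem_of_erase (h ▸ Finset.mem_insert_self v _)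
  refine ⟨.cons (by simp [edge_adj, hNC']) (w.mapLe le_sup_left), fun E hE => ?_⟩
  rw [Walk.support_cons, Walk.support_mapLe_eq_support, List.mem_cons] at hE
  rcases hE with rfl | hE
  · exact Finset.inter_subset_left
  · exact hND.trans (hw E hE)

theorem sup_edge (hv : G.IsSimplicialIn s v) (hT : G.IsCliqueTreeOn (s.erase v) T)
    {C' : Finset V} (hC' : G.IsMaxCliqueIn (s.erase v) C') (hKC' : s.filter (G.Adj v) ⊆ C')
    (hK : ¬G.IsMaxCliqueIn (s.erase v) (s.filter (G.Adj v))) :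
    G.IsCliqueTreeOn s (T ⊔ edge (insert v (s.filter (G.Adj v))) C') := by
  set N := insert v (s.filter (G.Adj v))
  have hvN : v ∈ N := Finset.mem_insert_self v _
  have hmax : ∀ ⦃C⦄, G.IsMaxCliqueIn (s.erase v) C → G.IsMaxCliqueIn s C := by
    intro C hC
    refine hC.of_erase hv ?_
    rintro rfl
    exact hK hC
  refine ⟨hT.isAcyclic.sup_edge_of_not_reachable ?_, ?_, fun C D hC hD => ?_⟩
  · rintro ⟨w⟩
    match w with
    | .nil => exact hC'.notMem_of_erase hvN
    | .cons h _ => exact (hT.isMaxCliqueIn_of_adj h).notMem_of_erase hvN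
  · rintro C D (h | h)
    · exact hmax (hT.isMaxCliqueIn_of_adj h)
    · rcases ((edge_adj _ _ _ _).mp h).1 with ⟨rfl, -⟩ | ⟨rfl, -⟩
      · exact hv.isMaxCliqueIn_insert
      · exact hmax hC'
  by_cases hCN : C = N <;> by_cases hDN : D = N
  · subst hCN hDN
    exact ⟨.nil, by simp⟩
  · subst hCN
    exact hT.exists_walk_sup_edge hv hC' hKC' hD hDN
  · subst hDN
    obtain ⟨w, hw⟩ := hT.exists_walk_sup_edge hv hC' hKC' hC hCN
    refine ⟨w.reverse, fun E hE => ?_⟩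
    rw [Finset.inter_comm]
    exact hw E (by simpa using hE)
  · obtain ⟨w, hw⟩ := hT.exists_walk (hv.isMaxCliqueIn_erase hC hCN) (hv.isMaxCliqueIn_erase hD hDN)
    exact ⟨w.mapLe le_sup_left, by simpa using hw⟩

theorem exists_of_erase [Finite V] (hv : G.IsSimplicialIn s v)
    (hT : G.IsCliqueTreeOn (s.erase v) T) : ∃ T', G.IsCliqueTreeOn s T' := by
  by_cases hK : G.IsMaxCliqueIn (s.erase v) (s.filter (G.Adj v))
  · exact ⟨_, hT.comap_swap hv hK⟩
  · obtain ⟨C', hKC', hC'⟩ :=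
      exists_isMaxCliqueIn_superset filter_adj_subset_erase hv.isClique_filter_adj
    exact ⟨_, hT.sup_edge hv hC' hKC' hK⟩

end IsCliqueTreeOn

theorem IsChordal.exists_isCliqueTreeOn [Finite V] (hG : G.IsChordal) (s : Finset V) :
    ∃ T, G.IsCliqueTreeOn s T := by
  classical
  induction s using Finset.strongInduction with
  | H s ih =>
  rcases s.eq_empty_or_nonempty with rfl | hs
  · exact ⟨⊥, isCliqueTreeOn_empty⟩
  · obtain ⟨v, hv⟩ := hG.exists_isSimplicialIn hs
    obtain ⟨T, hT⟩ := ih _ (Finset.erase_ssubset hv.1)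
    exact hT.exists_of_erase hv

lemma IsCliqueTreeOn.exists_walk_induce [Fintype V] {T : SimpleGraph (Finset V)}
    (hT : G.IsCliqueTreeOn Finset.univ T) (C D : {C : Finset V // G.IsMaxClique C}) :
    ∃ w : (T.induce {C | G.IsMaxClique C}).Walk C D, ∀ E ∈ w.support, C.1 ∩ D.1 ⊆ E.1 := by
  obtain ⟨w, hw⟩ := hT.exists_walk (isMaxCliqueIn_univ.mpr C.2) (isMaxCliqueIn_univ.mpr D.2)
  have hsupp : ∀ E ∈ w.support, E ∈ {C | G.IsMaxClique C} := fun E hE =>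
    isMaxCliqueIn_univ.mp (hT.isMaxCliqueIn_of_mem_support w (isMaxCliqueIn_univ.mpr C.2) E hE)
  refine ⟨w.induce _ hsupp, fun E hE => hw E ?_⟩
  simpa using hE

end CliqueTree

end SimpleGraph

theorem exists_clique_tree_general (V : Type*) [Fintype V] [DecidableEq V] (G : SimpleGraph V)
    (hchord : G.IsChordal) :
    ∃ T : SimpleGraph {C : Finset V // G.IsMaxClique C},
      T.IsTree ∧
        ∀ (C C' : {C : Finset V // G.IsMaxClique C}) (p : T.Walk C C'), p.IsPath →
          ∀ C'' ∈ p.support, C.1 ∩ C'.1 ⊆ C''.1 := by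
  obtain ⟨T, hT⟩ := hchord.exists_isCliqueTreeOn Finset.univ
  have hacyc := hT.isAcyclic.induce {C | G.IsMaxClique C}
  obtain ⟨C₀, -, hC₀⟩ := G.exists_isMaxCliqueIn_superset (Finset.empty_subset Finset.univ)
    (by simp)
  have : Nonempty {C : Finset V // G.IsMaxClique C} := ⟨⟨C₀, SimpleGraph.isMaxCliqueIn_univ.mp hC₀⟩⟩
  refine ⟨T.induce {C | G.IsMaxClique C}, ⟨⟨fun C D => ?_⟩, hacyc⟩, ?_⟩
  · exact (hT.exists_walk_induce C D).elim fun w _ => w.reachable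
  · intro C C' p hp
    obtain ⟨w, hw⟩ := hT.exists_walk_induce C C'
    exact hacyc.forall_mem_support_of_isPath w hw hp

/-- Every finite connected chordal graph has a clique tree: a tree on its maximal cliques
with the clique intersection property, i.e., for any two maximal cliques `C`, `C'`, their
intersection is contained in every maximal clique on the (unique) path between them. -/
theorem exists_clique_tree (V : Type*) [Fintype V] [DecidableEq V] (G : SimpleGraph V)
    (hconn : G.Connected) (hchord : G.IsChordal) :
    ∃ T : SimpleGraph {C : Finset V // G.IsMaxClique C},
      T.IsTree ∧
        ∀ (C C' : {C : Finset V // G.IsMaxClique C}) (p : T.Walk C C'), p.IsPath →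
          ∀ C'' ∈ p.support, C.1 ∩ C'.1 ⊆ C''.1 :=
  exists_clique_tree_general V G hchord
end

section
/- A finite simple graph G on n vertices is chordal if and only if it admits a perfect elimination ordering, i.e., an enumeration v₁, …, vₙ of its vertices such that for every i, the set of vertices vⱼ with j > i that are adjacent to vᵢ is a clique of G. -/
/-!
If `σ` is a perfect elimination ordering and `C` a cycle of length at least four, the two
neighbours on `C` of its `σ`-first vertex are later neighbours of it, hence adjacent, and this
edge is a chord of `C`.

Conversely, by Dirac's lemma a chordal graph that is not complete has two nonadjacent simplicial
vertices. Take nonadjacent `a`, `b` and a separator `S` of minimum size. Every `s ∈ S` has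
neighbours in the components `A ∋ a` and `B ∋ b` of `G - S`, so two nonadjacent `s, t ∈ S` would
be joined by a shortest path through `A` and one through `B`, which together form a chordless
cycle of length at least four. Hence `S` is a clique, and induction applied to `G[A ∪ S]` yields
a simplicial vertex of `G` in `A`, and likewise in `B`. Putting a simplicial vertex first and
recursing on the rest of the graph builds the ordering.
-/

namespace SimpleGraph

variable {V W : Type*} {G : SimpleGraph V}

def IsSimplicial (G : SimpleGraph V) (v : V) : Prop := G.IsClique (G.neighborSet v)

def IsPerfectEliminationOrder {ι : Type*} [LT ι] (G : SimpleGraph V) (σ : ι → V) : Prop :=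
  ∀ i, G.IsClique {v | ∃ j, i < j ∧ v = σ j ∧ G.Adj (σ i) (σ j)}

/-- Unlike `G.induce U`, this graph keeps the vertex type: vertices outside `U` become
isolated. -/
def restrict (G : SimpleGraph V) (U : Set V) : SimpleGraph V where
  Adj x y := G.Adj x y ∧ x ∈ U ∧ y ∈ U
  symm := ⟨fun _ _ ⟨h, hx, hy⟩ => ⟨h.symm, hy, hx⟩⟩
  loopless := ⟨fun _ ⟨h, _⟩ => h.ne rfl⟩

def Separates (G : SimpleGraph V) (S : Set V) (a b : V) : Prop :=
  a ∉ S ∧ b ∉ S ∧ ¬(G.restrict Sᶜ).Reachable a b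

namespace Walk

variable {u v : V}

lemma exists_length_lt_of_isChord {p : G.Walk u v} {x y : V} (h : p.IsChord s(x, y)) :
    ∃ q : G.Walk u v, q.length < p.length := by
  classical
  induction p with
  | nil =>
    obtain ⟨hxy, -, hx, hy⟩ := isChord_sym2Mk.1 h
    simp only [support_nil, List.mem_singleton] at hx hy
    exact absurd (hx.trans hy.symm) hxy.ne
  | @cons u w v hadj p ih =>
    obtain ⟨hxy, hne, hx, hy⟩ := isChord_sym2Mk.1 h
    have shortcut : ∀ {z}, z ∈ p.support → G.Adj u z → s(u, z) ≠ s(u, w) →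
        ∃ q : G.Walk u v, q.length < (cons hadj p).length := fun {z} hz huz hzw =>
      ⟨cons huz (p.dropUntil z hz), by
        simpa using length_dropUntil_lt_length hz (by rintro rfl; exact hzw rfl)⟩
    simp only [support_cons, List.mem_cons, edges_cons] at hx hy hne
    rcases hx with rfl | hx <;> rcases hy with rfl | hy
    · exact absurd rfl hxy.ne
    · exact shortcut hy hxy fun h => hne (.inl h)
    · exact shortcut hx hxy.symm fun h => hne (.inl (Sym2.eq_swap.trans h))
    · obtain ⟨q, hq⟩ := ih (isChord_sym2Mk.2 ⟨hxy, fun h => hne (.inr h), hx, hy⟩)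
      exact ⟨cons hadj q, by simpa using hq⟩

lemma isChordless_of_length_eq_dist {p : G.Walk u v} (hp : p.length = G.dist u v) :
    p.IsChordless := by
  rintro ⟨x, y⟩ h
  obtain ⟨q, hq⟩ := exists_length_lt_of_isChord h
  exact (dist_le q).not_gt (hp ▸ hq)

lemma IsPath.ne_of_mem_support_tail {z : V} {p : G.Walk u v} (hp : p.IsPath)
    (hz : z ∈ p.support.tail) : z ≠ u := by
  rintro rfl
  exact (List.nodup_cons.1 (p.cons_tail_support ▸ hp.support_nodup)).1 hz

lemma IsPath.isCycle_append_reverse {A B : Set V} {p q : G.Walk u v} (hp : p.IsPath)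
    (hq : q.IsPath) (hpA : ∀ z ∈ p.support, z = u ∨ z = v ∨ z ∈ A)
    (hqB : ∀ z ∈ q.support, z = u ∨ z = v ∨ z ∈ B) (hAB : Disjoint A B) (hlen : 1 < p.length) :
    (p.append q.reverse).IsCycle := by
  refine hp.isCycle_append hq.reverse (fun z hzp hzq => ?_) (.inl hlen)
  have hzA := hpA z (List.mem_of_mem_tail hzp)
  have hzB := hqB z (by simpa using List.mem_of_mem_tail hzq)
  simp only [hp.ne_of_mem_support_tail hzp, hq.reverse.ne_of_mem_support_tail hzq,
    false_or] at hzA hzB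
  exact Set.disjoint_left.1 hAB hzA hzB

lemma IsCycle.snd_penultimate_notMem_edges {c : G.Walk u u} (hc : c.IsCycle)
    (hl : 4 ≤ c.length) : s(c.snd, c.penultimate) ∉ c.edges := by
  cases c with
  | nil => simp at hl
  | @cons _ x _ hux p =>
    rw [cons_isCycle_iff] at hc
    have hp : ¬p.Nil := fun h => hux.ne h.eq.symm
    rw [snd_cons, penultimate_cons_of_not_nil _ _ hp]
    have hpen := p.adj_penultimate hp
    have hedges : p.edges = p.dropLast.edges ++ [s(p.penultimate, u)] := by
      rw [← List.concat_eq_append, ← edges_concat _ hpen, concat_dropLast]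
    have hlen : p.dropLast.length ≠ 1 := by
      have := p.length_dropLast_add_one hp
      simp only [length_cons] at hl
      omega
    simp only [edges_cons, hedges, List.mem_cons, List.mem_append, Sym2.eq_iff,
      List.not_mem_nil, or_false]
    rintro ((⟨hxu, -⟩ | ⟨-, hpu⟩) | h | ⟨-, hpu⟩ | ⟨hxu, -⟩)
    · exact hux.ne hxu.symm
    · exact hpen.ne hpu
    · exact hlen (hc.1.dropLast.length_eq_one_of_mem_edges h)
    · exact hpen.ne hpu
    · exact hux.ne hxu.symm

end Walk

theorem IsPerfectEliminationOrder.isChordal {ι : Type*} [LinearOrder ι] {σ : ι ≃ V}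
    (hσ : G.IsPerfectEliminationOrder σ) : G.IsChordal := by
  classical
  intro v w hw hl
  obtain ⟨u, hu, hmin⟩ := w.support.toFinset.exists_min_image σ.symm ⟨v, by simp⟩
  rw [List.mem_toFinset] at hu
  set c := w.rotate u hu
  have hc : c.IsCycle := hw.rotate hu
  have hc0 : ¬c.Nil := hc.not_nil
  have hlater : ∀ z ∈ w.support, G.Adj u z →
      z ∈ {v | ∃ j, σ.symm u < j ∧ v = σ j ∧ G.Adj (σ (σ.symm u)) (σ j)} := fun z hz huz =>
    ⟨σ.symm z, (hmin z (by simpa using hz)).lt_of_ne (by simpa using huz.ne),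
      by simp, by simpa using huz⟩
  have hsnd : c.snd ∈ w.support := (w.mem_support_rotate_iff u hu).1 (c.getVert_mem_support _)
  have hpen : c.penultimate ∈ w.support :=
    (w.mem_support_rotate_iff u hu).1 (c.getVert_mem_support _)
  refine ⟨c.snd, c.penultimate, hsnd, hpen,
    hσ _ (hlater _ hsnd (c.adj_snd hc0)) (hlater _ hpen (c.adj_penultimate hc0).symm)
      hc.snd_ne_penultimate, ?_⟩
  rw [← (w.rotate_edges u hu).perm.mem_iff]
  exact hc.snd_penultimate_notMem_edges (by rwa [Walk.length_rotate])

theorem IsChordal.comap {G : SimpleGraph W} (hG : G.IsChordal) (f : V ↪ W) :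
    (G.comap f).IsChordal := by
  intro v w hw hl
  obtain ⟨x, y, hx, hy, hxy, hne⟩ := hG (w.map (Hom.comap f G))
    ((Walk.isCycle_map_iff_of_injective f.injective).2 hw) (by rwa [Walk.length_map])
  simp only [Walk.support_map, List.mem_map] at hx hy
  obtain ⟨a, ha, rfl⟩ := hx
  obtain ⟨b, hb, rfl⟩ := hy
  exact ⟨a, b, ha, hb, hxy, fun h => hne (by simpa [Walk.edges_map] using ⟨_, h, rfl⟩)⟩

theorem IsChordal.induce (hG : G.IsChordal) (U : Set V) : (G.induce U).IsChordal :=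
  hG.comap _

theorem IsSimplicial.of_induce {U : Set V} {v : U} (hv : (G.induce U).IsSimplicial v)
    (hN : G.neighborSet v ⊆ U) : G.IsSimplicial v := by
  intro x hx y hy hxy
  exact hv (x := ⟨x, hN hx⟩) hx (y := ⟨y, hN hy⟩) hy fun h => hxy (congrArg Subtype.val h)

section restrict

variable {U U' : Set V}

theorem restrict_le (U : Set V) : G.restrict U ≤ G := fun _ _ ⟨h, _⟩ => h

theorem restrict_mono (h : U ⊆ U') : G.restrict U ≤ G.restrict U' :=
  fun _ _ ⟨hxy, hx, hy⟩ => ⟨hxy, h hx, h hy⟩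

theorem Walk.mem_of_mem_support_restrict {u v z : V} (p : (G.restrict U).Walk u v) (hu : u ∈ U)
    (hz : z ∈ p.support) : z ∈ U := by
  induction p with
  | nil => simp_all
  | cons h p ih => exact (List.mem_cons.1 hz).elim (· ▸ hu) (ih h.2.2)

theorem Reachable.mem_of_restrict {u v : V} (h : (G.restrict U).Reachable u v) (hu : u ∈ U) :
    v ∈ U :=
  h.elim fun p => p.mem_of_mem_support_restrict hu p.end_mem_support

theorem Reachable.restrict_setOf_reachable {a x : V} (h : (G.restrict U).Reachable a x) :
    (G.restrict {y | (G.restrict U).Reachable a y}).Reachable a x := by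
  replace h := (reachable_iff_reflTransGen _ _).1 h
  induction h with
  | refl => rfl
  | @tail y z hay hyz ih =>
    have hy := (reachable_iff_reflTransGen _ _).2 hay
    exact ih.trans (Adj.reachable ⟨hyz.1, hy, hy.trans hyz.reachable⟩)

theorem Walk.mem_edges_of_length_eq_dist_restrict {u v x y : V} {p : (G.restrict U).Walk u v}
    (hp : p.length = (G.restrict U).dist u v) (hu : u ∈ U) (hx : x ∈ p.support)
    (hy : y ∈ p.support) (hxy : G.Adj x y) : s(x, y) ∈ p.edges :=
  (isChordless_of_length_eq_dist hp).mem_edges hx hy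
    ⟨hxy, p.mem_of_mem_support_restrict hu hx, p.mem_of_mem_support_restrict hu hy⟩

end restrict

/-- Gluing a shortest `s`–`t` path through `A` to one through `B` gives a cycle whose only
possible chord is `s(s, t)`. -/
theorem IsChordal.adj_of_reachable_restrict (hG : G.IsChordal) {A B : Set V} {s t : V}
    (hst : s ≠ t) (hAB : Disjoint A B) (hnadj : ∀ x ∈ A, ∀ y ∈ B, ¬G.Adj x y)
    (hA : (G.restrict (insert s (insert t A))).Reachable s t)
    (hB : (G.restrict (insert s (insert t B))).Reachable s t) : G.Adj s t := by
  by_contra hnst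
  obtain ⟨p, hp, hpd⟩ := hA.exists_path_of_dist
  obtain ⟨q, hq, hqd⟩ := hB.exists_path_of_dist
  have hpA : ∀ z ∈ p.support, z = s ∨ z = t ∨ z ∈ A :=
    fun z hz => p.mem_of_mem_support_restrict (by simp) hz
  have hqB : ∀ z ∈ q.support, z = s ∨ z = t ∨ z ∈ B :=
    fun z hz => q.mem_of_mem_support_restrict (by simp) hz
  have hp2 : 1 < p.length := hpd ▸ hA.one_lt_dist_of_ne_of_not_adj hst fun h => hnst h.1
  have hq2 : 1 < q.length := hqd ▸ hB.one_lt_dist_of_ne_of_not_adj hst fun h => hnst h.1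
  set c := (p.mapLe (restrict_le _)).append (q.mapLe (restrict_le _)).reverse
  have hc : c.IsCycle := (hp.mapLe _).isCycle_append_reverse (hq.mapLe _)
    (by simpa using hpA) (by simpa using hqB) hAB (by simpa using hp2)
  obtain ⟨x, y, hx, hy, hxy, hxyc⟩ := hG c hc (by simp [c]; omega)
  have hsupp : ∀ z ∈ c.support, z ∈ p.support ∨ z ∈ q.support := by
    simp [c, Walk.mem_support_append_iff]
  have hpp : x ∈ p.support → y ∈ p.support → False := fun hxp hyp => hxyc <| by
    simp [c, p.mem_edges_of_length_eq_dist_restrict hpd (by simp) hxp hyp hxy]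
  have hqq : x ∈ q.support → y ∈ q.support → False := fun hxq hyq => hxyc <| by
    simp [c, q.mem_edges_of_length_eq_dist_restrict hqd (by simp) hxq hyq hxy]
  have hpq : ∀ {x y}, G.Adj x y → x ∈ p.support → x ∉ q.support → y ∈ q.support →
      y ∉ p.support → False := by
    intro x y hxy hxp hxq hyq hyp
    have hxA := hpA x hxp
    have hyB := hqB y hyq
    have : x ≠ s ∧ x ≠ t ∧ y ≠ s ∧ y ≠ t := by
      refine ⟨?_, ?_, ?_, ?_⟩ <;> rintro rfl <;> simp_all
    simp only [this, false_or] at hxA hyB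
    exact hnadj x hxA y hyB hxy
  have := hpq hxy
  have := hpq hxy.symm
  have := hsupp x hx
  have := hsupp y hy
  tauto

section Separates

variable {S : Set V} {a b : V}

theorem Separates.symm (h : G.Separates S a b) : G.Separates S b a :=
  ⟨h.2.1, h.1, fun h' => h.2.2 h'.symm⟩

theorem Separates.ne {x y : V} (hS : G.Separates S a b) (hax : (G.restrict Sᶜ).Reachable a x)
    (hby : (G.restrict Sᶜ).Reachable b y) : x ≠ y := by
  rintro rfl
  exact hS.2.2 (hax.trans hby.symm)

theorem Separates.not_adj {x y : V} (hS : G.Separates S a b)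
    (hax : (G.restrict Sᶜ).Reachable a x) (hby : (G.restrict Sᶜ).Reachable b y) :
    ¬G.Adj x y := fun hxy =>
  hS.ne (hax.trans (Adj.reachable ⟨hxy, hax.mem_of_restrict hS.1, hby.mem_of_restrict hS.2.1⟩))
    hby rfl

theorem separates_compl_pair (hab : a ≠ b) (hnadj : ¬G.Adj a b) : G.Separates {a, b}ᶜ a b := by
  refine ⟨by simp, by simp, ?_⟩
  rintro ⟨_ | ⟨⟨hadj, -, hw⟩, -⟩⟩
  · exact hab rfl
  · simp only [compl_compl, Set.mem_insert_iff, Set.mem_singleton_iff] at hw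
    rcases hw with rfl | rfl
    exacts [hadj.ne rfl, hnadj hadj]

theorem exists_adj_of_reachable_restrict_diff {s : V} (ha : a ∉ S)
    (h : (G.restrict (S \ {s})ᶜ).Reachable a b) (hnr : ¬(G.restrict Sᶜ).Reachable a b) :
    ∃ x, (G.restrict Sᶜ).Reachable a x ∧ G.Adj s x := by
  replace h := (reachable_iff_reflTransGen _ _).1 h
  induction h with
  | refl => exact absurd .rfl hnr
  | @tail y z _ hyz ih =>
    by_cases hay : (G.restrict Sᶜ).Reachable a y
    · obtain ⟨hyz, -, hz⟩ := hyz
      by_cases hzs : z = s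
      · exact ⟨y, hay, hzs ▸ hyz.symm⟩
      · have hzS : z ∈ Sᶜ := fun hzS => hz ⟨hzS, hzs⟩
        exact absurd (hay.trans (Adj.reachable ⟨hyz, hay.mem_of_restrict ha, hzS⟩)) hnr
    · exact ih hay

theorem Separates.exists_adj_of_minimal [Finite V] {s : V} (hS : G.Separates S a b)
    (hmin : ∀ T, G.Separates T a b → S.ncard ≤ T.ncard) (hs : s ∈ S) :
    ∃ x, (G.restrict Sᶜ).Reachable a x ∧ G.Adj s x := by
  refine exists_adj_of_reachable_restrict_diff hS.1 (by_contra fun h => ?_) hS.2.2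
  exact (hmin _ ⟨fun h => hS.1 h.1, fun h => hS.2.1 h.1, h⟩).not_gt
    (Set.ncard_sdiff_singleton_lt_of_mem hs)

theorem Separates.reachable_of_minimal [Finite V] {s t : V} (hS : G.Separates S a b)
    (hmin : ∀ T, G.Separates T a b → S.ncard ≤ T.ncard) (hs : s ∈ S) (ht : t ∈ S) :
    (G.restrict (insert s (insert t {x | (G.restrict Sᶜ).Reachable a x}))).Reachable s t := by
  set A := {x | (G.restrict Sᶜ).Reachable a x}
  obtain ⟨x, hax, hsx⟩ := hS.exists_adj_of_minimal hmin hs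
  obtain ⟨y, hay, hty⟩ := hS.exists_adj_of_minimal hmin ht
  have hxy : (G.restrict (insert s (insert t A))).Reachable x y :=
    (hax.restrict_setOf_reachable.symm.trans hay.restrict_setOf_reachable).mono
      (restrict_mono fun z hz => Set.mem_insert_of_mem _ (Set.mem_insert_of_mem _ hz))
  have hsx' : (G.restrict (insert s (insert t A))).Adj s x := ⟨hsx, .inl rfl, .inr (.inr hax)⟩
  have hyt : (G.restrict (insert s (insert t A))).Adj y t :=
    ⟨hty.symm, .inr (.inr hay), .inr (.inl rfl)⟩
  exact hsx'.reachable.trans (hxy.trans hyt.reachable)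

theorem IsChordal.isClique_of_minimal_separates [Finite V] (hG : G.IsChordal)
    (hS : G.Separates S a b) (hmin : ∀ T, G.Separates T a b → S.ncard ≤ T.ncard) :
    G.IsClique S := fun _ hs _ ht hst =>
  hG.adj_of_reachable_restrict hst (Set.disjoint_left.2 fun _ hax hbx => hS.ne hax hbx rfl)
    (fun _ hax _ hby => hS.not_adj hax hby) (hS.reachable_of_minimal hmin hs ht)
    (hS.symm.reachable_of_minimal (fun T hT => hmin T hT.symm) hs ht)

end Separates

theorem exists_reachable_isSimplicial_of_induce {S : Set V} {a : V} (hS : G.IsClique S)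
    (ha : a ∉ S)
    (hU : G.induce ({x | (G.restrict Sᶜ).Reachable a x} ∪ S) = ⊤ ∨
      ∃ x y, x ≠ y ∧ ¬(G.induce ({x | (G.restrict Sᶜ).Reachable a x} ∪ S)).Adj x y ∧
        (G.induce ({x | (G.restrict Sᶜ).Reachable a x} ∪ S)).IsSimplicial x ∧
        (G.induce ({x | (G.restrict Sᶜ).Reachable a x} ∪ S)).IsSimplicial y) :
    ∃ x, (G.restrict Sᶜ).Reachable a x ∧ G.IsSimplicial x := by
  set A := {x | (G.restrict Sᶜ).Reachable a x}
  have hN : ∀ x ∈ A, G.neighborSet x ⊆ A ∪ S := fun x hx y hxy => by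
    by_cases hyS : y ∈ S
    · exact .inr hyS
    · exact .inl (hx.trans (Adj.reachable ⟨hxy, hx.mem_of_restrict ha, hyS⟩))
  rcases hU with htop | ⟨x, y, hxy, hnadj, hx, hy⟩
  · exact ⟨a, .rfl, (induce_eq_top.1 htop).subset (hN a .rfl)⟩
  · have : (x : V) ∈ A ∨ (y : V) ∈ A := by
      by_contra! h
      exact hnadj (hS (x.2.resolve_left h.1) (y.2.resolve_left h.2) (Subtype.coe_injective.ne hxy))
    rcases this with hxA | hyA
    · exact ⟨x, hxA, hx.of_induce (hN x hxA)⟩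
    · exact ⟨y, hyA, hy.of_induce (hN y hyA)⟩

theorem IsChordal.eq_top_or_exists_isSimplicial_pair [Finite V] (hG : G.IsChordal) :
    G = ⊤ ∨ ∃ x y, x ≠ y ∧ ¬G.Adj x y ∧ G.IsSimplicial x ∧ G.IsSimplicial y := by
  induction h : Nat.card V using Nat.strong_induction_on generalizing V with
  | _ n ih =>
    refine or_iff_not_imp_left.2 fun htop => ?_
    obtain ⟨a, b, hab, hnadj⟩ : ∃ a b, a ≠ b ∧ ¬G.Adj a b := by
      contrapose! htop
      ext a b
      exact ⟨Adj.ne, htop a b⟩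
    obtain ⟨S, hS, hmin⟩ :
        ∃ S, G.Separates S a b ∧ ∀ T, G.Separates T a b → S.ncard ≤ T.ncard := by
      obtain ⟨S, hS, hmin⟩ := (measure Set.ncard).wf.has_min {S | G.Separates S a b}
        ⟨_, separates_compl_pair hab hnadj⟩
      exact ⟨S, hS, fun T hT => not_lt.1 (hmin T hT)⟩
    have hcl := hG.isClique_of_minimal_separates hS hmin
    have side : ∀ {c d}, G.Separates S c d →
        ∃ x, (G.restrict Sᶜ).Reachable c x ∧ G.IsSimplicial x := fun {c d} hcd =>
      exists_reachable_isSimplicial_of_induce hcl hcd.1 <| ih _ (h ▸ Finite.card_subtype_lt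
        (x := d) (by rintro (hd | hd); exacts [hcd.2.2 hd, hcd.2.1 hd])) (hG.induce _) rfl
    obtain ⟨x, hax, hx⟩ := side hS
    obtain ⟨y, hby, hy⟩ := side hS.symm
    exact ⟨x, y, hS.ne hax hby, hS.not_adj hax hby, hx, hy⟩

theorem IsChordal.exists_isSimplicial [Finite V] [Nonempty V] (hG : G.IsChordal) :
    ∃ v, G.IsSimplicial v := by
  rcases hG.eq_top_or_exists_isSimplicial_pair with rfl | ⟨x, -, -, -, hx, -⟩
  · exact ⟨Classical.arbitrary V, (isClique_univ.2 rfl).subset (Set.subset_univ _)⟩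
  · exact ⟨x, hx⟩

section PerfectEliminationOrder

variable {ι : Type*} [LT ι]

theorem IsPerfectEliminationOrder.comp {G : SimpleGraph W} {f : V → W} {σ : ι → V}
    (hσ : (G.comap f).IsPerfectEliminationOrder σ) : G.IsPerfectEliminationOrder (f ∘ σ) := by
  rintro i _ ⟨j, hij, rfl, hj⟩ _ ⟨k, hik, rfl, hk⟩ hjk
  exact hσ i ⟨j, hij, rfl, hj⟩ ⟨k, hik, rfl, hk⟩ (ne_of_apply_ne f hjk)

theorem IsPerfectEliminationOrder.cons {n : ℕ} {v : V} {τ : Fin n → V} (hv : G.IsSimplicial v)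
    (hτ : G.IsPerfectEliminationOrder τ) :
    G.IsPerfectEliminationOrder (Fin.cons v τ : Fin (n + 1) → V) := by
  intro i
  induction i using Fin.cases with
  | zero => exact hv.subset fun _ ⟨_, _, h, hadj⟩ => h ▸ hadj
  | succ i =>
    refine (hτ i).subset ?_
    rintro _ ⟨j, hij, rfl, hadj⟩
    obtain ⟨j, rfl⟩ := Fin.exists_succ_eq.2 (Fin.ne_zero_of_lt hij)
    exact ⟨j, Fin.succ_lt_succ_iff.1 hij, by simp, by simpa using hadj⟩

end PerfectEliminationOrder

theorem IsChordal.exists_isPerfectEliminationOrder :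
    ∀ {n : ℕ} {G : SimpleGraph (Fin n)}, G.IsChordal →
      ∃ σ : Equiv.Perm (Fin n), G.IsPerfectEliminationOrder σ
  | 0, _, _ => ⟨1, fun i => i.elim0⟩
  | n + 1, G, hG => by
    obtain ⟨v, hv⟩ := hG.exists_isSimplicial
    obtain ⟨σ, hσ⟩ := (hG.comap v.succAboveEmb).exists_isPerfectEliminationOrder
    have hinj : Function.Injective (Fin.cons v (v.succAbove ∘ σ) : Fin (n + 1) → Fin (n + 1)) :=
      Fin.cons_injective_iff.2 ⟨fun ⟨i, hi⟩ => v.succAbove_ne _ hi,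
        Fin.succAbove_right_injective.comp σ.injective⟩
    exact ⟨Equiv.ofBijective _ hinj.bijective_of_finite, hσ.comp.cons hv⟩

end SimpleGraph

/-- A finite simple graph is chordal iff it admits a perfect elimination ordering: an
enumeration `σ 0, …, σ (n-1)` of the vertices such that for every `i`, the later neighbors
`{σ j | j > i, σ j adjacent to σ i}` form a clique. -/
theorem chordal_iff_perfect_elimination_ordering (n : ℕ) (G : SimpleGraph (Fin n)) :
    G.IsChordal ↔
      ∃ σ : Equiv.Perm (Fin n), ∀ i : Fin n,
        G.IsClique {v : Fin n | ∃ j : Fin n, i < j ∧ v = σ j ∧ G.Adj (σ i) (σ j)} :=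
  ⟨fun hG => hG.exists_isPerfectEliminationOrder,
    fun ⟨σ, hσ⟩ => SimpleGraph.IsPerfectEliminationOrder.isChordal (σ := σ) hσ⟩
end
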